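/- With Γ_M as above, Γ_M ⊢ A is derivable iff there exists a ground atom R(c̄) ∈ I(P,M) with R̄(c̄) ∈ M̄ (i.e., iff P is unsound for M). -/

import Mathlib

namespace ASP

/-- A ground clause `head ← pos, ¬neg` of an answer set program. -/
structure GClause (α : Type) where
  head : α
  pos : List α
  neg : List α

variable {α : Type}

/-- Immediate-consequence operator of the Gelfond–Lifschitz reduct `P^M`:
`F(I) = I ∪ {a | some clause a ← a₁,…,aₙ of P^M has all aᵢ ∈ I}`. -/
def tcons (P : Set (GClause α)) (M : Set α) : Set α →o Set α where
  toFun I := I ∪ {a | ∃ c ∈ P, c.head = a ∧ (∀ b ∈ c.pos, b ∈ I) ∧ (∀ b ∈ c.neg, b ∉ M)}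
  monotone' := by
    intro I J h x hx
    rcases hx with hx | ⟨c, hc, h1, h2, h3⟩
    · exact Or.inl (h hx)
    · exact Or.inr ⟨c, hc, h1, fun b hb => h (h2 b hb), h3⟩

/-- The interpretation `I(P,M)`: least fixed point of the immediate-consequence
operator of the reduct `P^M`. -/
def interp (P : Set (GClause α)) (M : Set α) : Set α := OrderHom.lfp (tcons P M)

/-- `M` is a stable model (answer set) of `P` iff `M = I(P,M)`. -/
def IsStable (P : Set (GClause α)) (M : Set α) : Prop := M = interp P M

end ASP
namespace ASP

/-- Formulas of minimal implicational propositional logic over atoms `α`. -/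
inductive PForm (α : Type) where
  | at_ : α → PForm α
  | imp : PForm α → PForm α → PForm α

/-- Provability in minimal propositional logic (only → introduction/elimination). -/
inductive PPrv {α : Type} : Set (PForm α) → PForm α → Prop
  | ax {Γ : Set (PForm α)} {φ : PForm α} : φ ∈ Γ → PPrv Γ φ
  | impI {Γ : Set (PForm α)} {φ ψ : PForm α} : PPrv (insert φ Γ) ψ → PPrv Γ (.imp φ ψ)
  | impE {Γ : Set (PForm α)} {φ ψ : PForm α} : PPrv Γ (.imp φ ψ) → PPrv Γ φ → PPrv Γ ψ

end ASP
namespace TR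

/-- A ground atom `R(c̄)`: predicate index plus constant arguments. -/
structure GA where
  pred : ℕ
  args : List ℕ
deriving DecidableEq

/-- Atom alphabet of the translated formula φ: for every program predicate `R`
there are `R`, `R̄`, `R!`, `R?`; pair predicates `RP`; clause predicates `K⁰`
and nullary `K̄⁰`; and the nullary `•, ∘, A, B, ⊙`. -/
inductive At where
  | pos : GA → At
  | bar : GA → At
  | bang : GA → At
  | quest : GA → At
  | mem : GA → GA → At
  | k : ℕ → List ℕ → At
  | kbar : ℕ → At
  | bullet : At
  | circ : At
  | unsound : At
  | incomplete : At
  | lup : At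
deriving DecidableEq

abbrev F := ASP.PForm At

def av (a : At) : F := .at_ a

def imps (l : List F) (t : F) : F := l.foldr ASP.PForm.imp t

/-- Axioms (1): `(R(c̄)→⊙) → (R̄(c̄)→⊙) → ⊙`. -/
def ax1 (B : Set GA) : Set F :=
  {f | ∃ a ∈ B, f = .imp (.imp (av (.pos a)) (av .lup)) (.imp (.imp (av (.bar a)) (av .lup)) (av .lup))}

/-- Axioms (2): `Ω→⊙`, `A→⊙`, `B→⊙`. -/
def ax2 (ω : GA) : Set F :=
  {.imp (av (.pos ω)) (av .lup), .imp (av .unsound) (av .lup), .imp (av .incomplete) (av .lup)}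

/-- Axioms (3): `R̄(c̄) → (R!(c̄)→•) → A`. -/
def ax3 (B : Set GA) : Set F :=
  {f | ∃ a ∈ B, f = .imp (av (.bar a)) (.imp (.imp (av (.bang a)) (av .bullet)) (av .unsound))}

/-- Axioms (4): `R(c̄) → (R?(c̄)→∘) → B`. -/
def ax4 (B : Set GA) : Set F :=
  {f | ∃ a ∈ B, f = .imp (av (.pos a)) (.imp (.imp (av (.quest a)) (av .circ)) (av .incomplete))}

/-- Axiom (5) for a ground clause `R(ē) ← P₁(c̄₁),…,P_r(c̄_r), ¬S₁(d̄₁),…,¬S_s(d̄_s)`: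
`R!(ē) → (P₁!(c̄₁)→•) → ⋯ → (P_r!(c̄_r)→•) → S̄₁(d̄₁) → ⋯ → S̄_s(d̄_s) → •`. -/
def clax (c : ASP.GClause GA) : F :=
  .imp (av (.bang c.head))
    (imps (c.pos.map (fun b => .imp (av (.bang b)) (av .bullet)) ++
           c.neg.map (fun s => av (.bar s))) (av .bullet))

def ax5 (Pg : List (ASP.GClause GA)) : Set F := {f | ∃ c ∈ Pg, f = clax c}

/-- Axioms (6): `R?(c̄) → (K⁰₁(c̄)→K̄⁰₁) → ⋯ → (K⁰_l(c̄)→K̄⁰_l) → ∘`,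
where K₁,…,K_l are all clauses whose target predicate is that of the atom. -/
def ax6 (Pg : List (ASP.GClause GA)) (B : Set GA) : Set F :=
  {f | ∃ a ∈ B, f = .imp (av (.quest a))
    (imps (((Pg.zipIdx.map Prod.swap).filter (fun jc => jc.2.head.pred == a.pred)).map
      (fun jc => ASP.PForm.imp (av (.k jc.1 a.args)) (av (.kbar jc.1)))) (av .circ))}

/-- Axioms (7)-(8): a mismatch between the queried arguments and the clause head
arguments immediately yields `K⁰(c̄) → K̄⁰`. -/
def ax7 (Pg : List (ASP.GClause GA)) (B : Set GA) : Set F :=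
  {f | ∃ jc ∈ (Pg.zipIdx.map Prod.swap), ∃ a ∈ B, a.pred = jc.2.head.pred ∧ a.args ≠ jc.2.head.args ∧
    f = .imp (av (.k jc.1 a.args)) (av (.kbar jc.1))}

/-- Axioms (10): `K⁰(ē) → (P?(c̄) → RP(ē,c̄) → ∘) → K̄⁰`, for each positive body atom. -/
def ax10 (Pg : List (ASP.GClause GA)) : Set F :=
  {f | ∃ jc ∈ (Pg.zipIdx.map Prod.swap), ∃ b ∈ jc.2.pos, f = .imp (av (.k jc.1 jc.2.head.args))
    (.imp (.imp (av (.quest b)) (.imp (av (.mem jc.2.head b)) (av .circ))) (av (.kbar jc.1)))}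

/-- Axioms (11): `K⁰(ē) → S(d̄) → K̄⁰`, for each negative body atom `¬S(d̄)`. -/
def ax11 (Pg : List (ASP.GClause GA)) : Set F :=
  {f | ∃ jc ∈ (Pg.zipIdx.map Prod.swap), ∃ s ∈ jc.2.neg, f = .imp (av (.k jc.1 jc.2.head.args))
    (.imp (av (.pos s)) (av (.kbar jc.1)))}

/-- Axioms (12): transitivity `RP(ā,b̄) → PQ(b̄,c̄) → (RQ(ā,c̄)→∘) → ∘`. -/
def ax12 (B : Set GA) : Set F :=
  {f | ∃ a ∈ B, ∃ b ∈ B, ∃ c ∈ B, f = .imp (av (.mem a b)) (.imp (av (.mem b c))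
    (.imp (.imp (av (.mem a c)) (av .circ)) (av .circ)))}

/-- Axioms (13): loop detection `PP(ā,ā) → ∘`. -/
def ax13 (B : Set GA) : Set F := {f | ∃ a ∈ B, f = .imp (av (.mem a a)) (av .circ)}

/-- All axioms of the translated formula φ. -/
def Axioms (Pg : List (ASP.GClause GA)) (B : Set GA) (ω : GA) : Set F :=
  ax1 B ∪ ax2 ω ∪ ax3 B ∪ ax4 B ∪ ax5 Pg ∪ ax6 Pg B ∪ ax7 Pg B ∪
    ax10 Pg ∪ ax11 Pg ∪ ax12 B ∪ ax13 B

/-- `Γ_M`: the union of `M ∪ M̄` with the axioms of φ. -/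
def GammaM (Pg : List (ASP.GClause GA)) (B : Set GA) (ω : GA) (M : Set GA) : Set F :=
  Axioms Pg B ω ∪ {f | ∃ a ∈ M, f = av (.pos a)} ∪ {f | ∃ a ∈ B, a ∉ M ∧ f = av (.bar a)}

/-- The implicational formula of a clause of `P̄` (negative atoms replaced by barred ones). -/
def cbarF (c : ASP.GClause GA) : F :=
  imps (c.pos.map (fun b => av (.pos b)) ++ c.neg.map (fun s => av (.bar s))) (av (.pos c.head))

/-- The environment `P̄ ∪ M̄`. -/
def PbarMbar (Pg : List (ASP.GClause GA)) (B : Set GA) (M : Set GA) : Set F :=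
  {f | ∃ c ∈ Pg, f = cbarF c} ∪ {f | ∃ a ∈ B, a ∉ M ∧ f = av (.bar a)}

def progSet (Pg : List (ASP.GClause GA)) : Set (ASP.GClause GA) := {c | c ∈ Pg}

/-- All atoms of the program lie in the Herbrand base `B`. -/
def WfProg (Pg : List (ASP.GClause GA)) (B : Set GA) : Prop :=
  ∀ c ∈ Pg, c.head ∈ B ∧ (∀ b ∈ c.pos, b ∈ B) ∧ (∀ s ∈ c.neg, s ∈ B)

end TR

/-!
Soundness of minimal logic w.r.t. the classical valuation that reads `R!(c̄)` as
`R(c̄) ∉ I(P,M)`, `R̄(c̄)` as `R(c̄) ∉ M`, `•` as falsity and `A` as "P is unsound for M"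
(every other atom being true) shows that `Γ_M ⊢ A` forces unsoundness: the clause axioms (5)
hold under it precisely because `I(P,M)` is closed under the reduct. Conversely, induction
along the least fixed point gives `Γ_M ⊢ R!(c̄) → •` for every `R(c̄) ∈ I(P,M)`, and
axiom (3) turns this together with `R̄(c̄) ∈ M̄` into a proof of `A`.
-/

namespace ASP

variable {α : Type}

def PForm.eval (v : α → Prop) : PForm α → Prop
  | .at_ a => v a
  | .imp φ ψ => φ.eval v → ψ.eval v

theorem PPrv.mono {Γ Δ : Set (PForm α)} {φ : PForm α} (h : PPrv Γ φ) (hΓΔ : Γ ⊆ Δ) :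
    PPrv Δ φ := by
  induction h generalizing Δ with
  | ax h => exact .ax (hΓΔ h)
  | impI _ ih => exact .impI (ih (Set.insert_subset_insert hΓΔ))
  | impE _ _ ih₁ ih₂ => exact .impE (ih₁ hΓΔ) (ih₂ hΓΔ)

theorem PPrv.eval_of_forall_eval {v : α → Prop} {Γ : Set (PForm α)} {φ : PForm α}
    (h : PPrv Γ φ) (hΓ : ∀ ψ ∈ Γ, ψ.eval v) : φ.eval v := by
  induction h with
  | ax h => exact hΓ _ h
  | impI _ ih =>
    exact fun hφ => ih fun ψ hψ => by
      rcases hψ with rfl | hψ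
      exacts [hφ, hΓ ψ hψ]
  | impE _ _ ih₁ ih₂ => exact ih₁ hΓ (ih₂ hΓ)

theorem interp_mem_of_clause {P : Set (GClause α)} {M : Set α} {c : GClause α} (hc : c ∈ P)
    (hpos : ∀ b ∈ c.pos, b ∈ interp P M) (hneg : ∀ s ∈ c.neg, s ∉ M) :
    c.head ∈ interp P M := by
  rw [interp, ← OrderHom.map_lfp]
  exact Or.inr ⟨c, hc, rfl, hpos, hneg⟩

end ASP

namespace TR

theorem eval_imps {v : At → Prop} {L : List F} {t : F} :
    (imps L t).eval v ↔ ((∀ f ∈ L, f.eval v) → t.eval v) := by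
  induction L with
  | nil => simp [imps]
  | cons f L ih => simp only [imps, List.foldr_cons, ASP.PForm.eval] at ih ⊢; simp [ih]

theorem pprv_of_pprv_imps {Γ : Set F} {L : List F} {t : F} (h : ASP.PPrv Γ (imps L t))
    (hL : ∀ f ∈ L, ASP.PPrv Γ f) : ASP.PPrv Γ t := by
  induction L with
  | nil => exact h
  | cons f L ih => exact ih (.impE h (hL f List.mem_cons_self)) fun g hg => hL g (by simp [hg])

theorem ax3_subset_gammaM (Pg : List (ASP.GClause GA)) (B : Set GA) (ω : GA) (M : Set GA) :
    ax3 B ⊆ GammaM Pg B ω M := fun _ hf => by simp [GammaM, Axioms, hf]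

theorem ax5_subset_gammaM (Pg : List (ASP.GClause GA)) (B : Set GA) (ω : GA) (M : Set GA) :
    ax5 Pg ⊆ GammaM Pg B ω M := fun _ hf => by simp [GammaM, Axioms, hf]

theorem bar_mem_gammaM (Pg : List (ASP.GClause GA)) {B : Set GA} (ω : GA) {M : Set GA} {a : GA}
    (haB : a ∈ B) (haM : a ∉ M) : av (.bar a) ∈ GammaM Pg B ω M :=
  Or.inr ⟨a, haB, haM, rfl⟩

section Countermodel

variable (Pg : List (ASP.GClause GA)) (B : Set GA) (M : Set GA)

def Unsound : Prop := ∃ a, a ∈ ASP.interp (progSet Pg) M ∧ a ∈ B ∧ a ∉ M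

def unsoundVal : At → Prop
  | .bar a => a ∉ M
  | .bang a => a ∉ ASP.interp (progSet Pg) M
  | .bullet => False
  | .unsound => Unsound Pg B M
  | _ => True

theorem eval_clax {c : ASP.GClause GA} (hc : c ∈ Pg) : (clax c).eval (unsoundVal Pg B M) := by
  intro hhead
  refine eval_imps.mpr fun hL =>
    hhead (ASP.interp_mem_of_clause hc (fun b hb => ?_) fun s hs => ?_)
  · exact not_not.mp (hL _ (List.mem_append_left _ (List.mem_map_of_mem hb)))
  · exact hL _ (List.mem_append_right _ (List.mem_map_of_mem hs))

theorem eval_of_mem_gammaM (ω : GA) :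
    ∀ ψ ∈ GammaM Pg B ω M, ψ.eval (unsoundVal Pg B M) := by
  rintro ψ ((hax | ⟨a, -, rfl⟩) | ⟨a, -, haM, rfl⟩)
  · rcases hax with ((((((((((h1 | h2) | h3) | h4) | h5) | h6) | h7) | h10) | h11) | h12) | h13)
    · obtain ⟨a, -, rfl⟩ := h1; exact fun _ _ => trivial
    · rcases h2 with rfl | rfl | rfl <;> exact fun _ => trivial
    · obtain ⟨a, haB, rfl⟩ := h3
      exact fun haM hbang => ⟨a, not_not.mp hbang, haB, haM⟩
    · obtain ⟨a, -, rfl⟩ := h4; exact fun _ _ => trivial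
    · obtain ⟨c, hc, rfl⟩ := h5; exact eval_clax Pg B M hc
    · obtain ⟨a, -, rfl⟩ := h6; exact fun _ => eval_imps.mpr fun _ => trivial
    · obtain ⟨jc, -, a, -, -, -, rfl⟩ := h7; exact fun _ => trivial
    · obtain ⟨jc, -, b, -, rfl⟩ := h10; exact fun _ _ => trivial
    · obtain ⟨jc, -, s, -, rfl⟩ := h11; exact fun _ _ => trivial
    · obtain ⟨a, -, b, -, c, -, rfl⟩ := h12; exact fun _ _ _ => trivial
    · obtain ⟨a, -, rfl⟩ := h13; exact fun _ => trivial
  · trivial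
  · exact haM

theorem unsound_of_provable {ω : GA} (h : ASP.PPrv (GammaM Pg B ω M) (av .unsound)) :
    Unsound Pg B M :=
  h.eval_of_forall_eval (eval_of_mem_gammaM Pg B M ω)

end Countermodel

theorem interp_subset_provable_bang_imp_bullet {Pg : List (ASP.GClause GA)} {B : Set GA}
    (ω : GA) (M : Set GA) (hW : WfProg Pg B) :
    ASP.interp (progSet Pg) M ⊆
      {a | ASP.PPrv (GammaM Pg B ω M) (.imp (av (.bang a)) (av .bullet))} := by
  refine OrderHom.lfp_le _ ?_
  rintro a (ha | ⟨c, hc, rfl, hpos, hneg⟩)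
  · exact ha
  · set Γ := insert (av (.bang c.head)) (GammaM Pg B ω M)
    have hclax : ASP.PPrv Γ (clax c) :=
      .ax (Set.mem_insert_of_mem _ (ax5_subset_gammaM Pg B ω M ⟨c, hc, rfl⟩))
    refine .impI (pprv_of_pprv_imps (.impE hclax (.ax (Set.mem_insert _ _))) fun f hf => ?_)
    rcases List.mem_append.mp hf with hf | hf
    · obtain ⟨b, hb, rfl⟩ := List.mem_map.mp hf
      exact (hpos b hb).mono (Set.subset_insert _ _)
    · obtain ⟨s, hs, rfl⟩ := List.mem_map.mp hf
      exact .ax (Set.mem_insert_of_mem _ (bar_mem_gammaM Pg ω ((hW c hc).2.2 s hs) (hneg s hs)))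

theorem provable_unsound_of_unsound {Pg : List (ASP.GClause GA)} {B : Set GA} (ω : GA)
    {M : Set GA} (hW : WfProg Pg B) (h : Unsound Pg B M) :
    ASP.PPrv (GammaM Pg B ω M) (av .unsound) := by
  obtain ⟨a, haI, haB, haM⟩ := h
  have hax3 : ASP.PPrv (GammaM Pg B ω M)
      (.imp (av (.bar a)) (.imp (.imp (av (.bang a)) (av .bullet)) (av .unsound))) :=
    .ax (ax3_subset_gammaM Pg B ω M ⟨a, haB, rfl⟩)
  exact .impE (.impE hax3 (.ax (bar_mem_gammaM Pg ω haB haM)))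
    (interp_subset_provable_bang_imp_bullet ω M hW haI)

end TR

theorem stmt8_general (Pg : List (ASP.GClause TR.GA)) (B : Set TR.GA) (ω : TR.GA)
    (M : Set TR.GA) (hW : TR.WfProg Pg B) :
    ASP.PPrv (TR.GammaM Pg B ω M) (TR.av .unsound) ↔
      ∃ a : TR.GA, a ∈ ASP.interp (TR.progSet Pg) M ∧ a ∈ B ∧ a ∉ M :=
  ⟨TR.unsound_of_provable Pg B M, TR.provable_unsound_of_unsound ω hW⟩

/-- `Γ_M ⊢ A` iff there is a ground atom `R(c̄) ∈ I(P,M)` with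
`R̄(c̄) ∈ M̄` (i.e. iff P is unsound for M). -/
theorem stmt8 (Pg : List (ASP.GClause TR.GA)) (B : Set TR.GA) (ω : TR.GA)
    (M : Set TR.GA) (hW : TR.WfProg Pg B) (hM : M ⊆ B) :
    ASP.PPrv (TR.GammaM Pg B ω M) (TR.av .unsound) ↔
      ∃ a : TR.GA, a ∈ ASP.interp (TR.progSet Pg) M ∧ a ∈ B ∧ a ∉ M :=
  stmt8_general Pg B ω M hW
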